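/- arXiv:1807.00402 — 2 statements merged into one kernel-verified Lean document; each statement's English description precedes it below -/
import Mathlib

section
/- Let (n_k)_{k≥1} be a strictly increasing sequence of positive integers, T ≥ 2 an integer, s > 1 and α ∈ (0,1) real, θ := (3 ln(3/2) − 1)/2, and suppose m_k = ⌈(n_k/θ) ln(ζ(s) n_k^{s+1}/α)⌉ for all k = 1,…,T. Then the random variable U_T := Σ_{k=2}^T B_k, where the B_k are independent binomial random variables with B_k ∼ Bin(m_k, (n_k − n_{k-1})/n_k), satisfies Var(U_T) < E(U_T) ≤ m_T + n_T − m_1; equivalently, Σ_{k=2}^T m_k ((n_k − n_{k-1})/n_k)(n_{k-1}/n_k) < Σ_{k=2}^T m_k (n_k − n_{k-1})/n_k ≤ m_T + n_T − m_1. -/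
/-!
Write `L_k := ln(ζ(s) n_k^{s+1}/α)`, which is nondecreasing in `k`. The `k`-th mean term is
`m_k − m_k n_{k-1}/n_k`, and `m_k n_{k-1}/n_k ≥ (n_{k-1}/θ) L_k ≥ (n_{k-1}/θ) L_{k-1} > m_{k-1} − 1`,
so it is at most `(m_k + n_k) − (m_{k-1} + n_{k-1})`: the mean bound telescopes. The variance
term is the mean term times `n_{k-1}/n_k < 1`, and `m_T > 0` because `α < 1 ≤ ζ(s)` makes
`L_T > 0`.
-/

open Real

noncomputable section

def theta : ℝ := (3 * Real.log (3 / 2) - 1) / 2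

def zetaR (s : ℝ) : ℝ := ∑' k : ℕ, 1 / ((k : ℝ) + 1) ^ s

theorem theta_pos : 0 < theta := by
  have h := Real.log_lt_sub_one_of_pos (x := 2 / 3) (by norm_num) (by norm_num)
  have h_inv : Real.log (3 / 2) = -Real.log (2 / 3) := by
    rw [← Real.log_inv]
    norm_num
  unfold theta
  linarith

theorem one_le_zetaR {s : ℝ} (hs : 1 < s) : 1 ≤ zetaR s := by
  have hsum : Summable fun k : ℕ => 1 / ((k : ℝ) + 1) ^ s := by
    simpa using (summable_nat_add_iff 1).mpr (Real.summable_one_div_nat_rpow.mpr hs)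
  simpa [zetaR] using hsum.le_tsum 0 fun k _ => by positivity

theorem natCeil_mul_le_natCeil_mul_mul_div_add_one {p q a b : ℝ} (hp : 0 ≤ p) (hq : 0 < q)
    (hab : a ≤ b) : (⌈p * a⌉₊ : ℝ) ≤ ⌈q * b⌉₊ * (p / q) + 1 := by
  rcases lt_or_ge (p * a) 0 with hneg | hnonneg
  · rw [Nat.ceil_eq_zero.mpr hneg.le, Nat.cast_zero]
    positivity
  calc (⌈p * a⌉₊ : ℝ) ≤ p * b + 1 := by
        have : p * a ≤ p * b := mul_le_mul_of_nonneg_left hab hp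
        linarith [Nat.ceil_lt_add_one hnonneg]
    _ = q * b * (p / q) + 1 := by field_simp
    _ ≤ ⌈q * b⌉₊ * (p / q) + 1 := by gcongr; exact Nat.le_ceil _

theorem Finset.sum_Icc_succ_sub_pred {M : Type*} [AddCommGroup M] (f : ℕ → M) {a b : ℕ} (hab : a ≤ b) :
    ∑ k ∈ Finset.Icc (a + 1) b, (f k - f (k - 1)) = f b - f a := by
  induction b, hab using Nat.le_induction with
  | base => simp
  | succ b hab ih =>
    rw [Finset.sum_Icc_succ_top (by omega), ih, Nat.add_sub_cancel]
    abel

/-- `E(U_T)` for `U_T = ∑_{k=2}^T B_k` with independent `B_k ∼ Bin(m_k, (n_k − n_{k-1})/n_k)`. -/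
def surplusMean (n m : ℕ → ℕ) (T : ℕ) : ℝ :=
  ∑ k ∈ Finset.Icc 2 T, (m k : ℝ) * (((n k : ℝ) - (n (k - 1) : ℝ)) / (n k : ℝ))

/-- `Var(U_T)` for the same `U_T`. -/
def surplusVariance (n m : ℕ → ℕ) (T : ℕ) : ℝ :=
  ∑ k ∈ Finset.Icc 2 T, (m k : ℝ) * (((n k : ℝ) - (n (k - 1) : ℝ)) / (n k : ℝ))
    * ((n (k - 1) : ℝ) / (n k : ℝ))

theorem StrictMono.one_le_apply {n : ℕ → ℕ} (hn : StrictMono n) {k : ℕ} (hk : 1 ≤ k) :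
    1 ≤ n k :=
  hk.trans (hn.id_le k)

theorem StrictMono.cast_apply_pos {n : ℕ → ℕ} (hn : StrictMono n) {k : ℕ} (hk : 1 ≤ k) :
    (0 : ℝ) < n k := by
  exact_mod_cast hn.one_le_apply hk

theorem StrictMono.cast_apply_pred_add_one_le {n : ℕ → ℕ} (hn : StrictMono n) {k : ℕ}
    (hk : 1 ≤ k) : (n (k - 1) : ℝ) + 1 ≤ n k := by
  exact_mod_cast hn (Nat.sub_lt hk one_pos)

theorem surplusVariance_lt_surplusMean {n : ℕ → ℕ} (hn : StrictMono n) (m : ℕ → ℕ) {T : ℕ}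
    (hT : 2 ≤ T) (hmT : 0 < m T) : surplusVariance n m T < surplusMean n m T := by
  have hratio : ∀ k ∈ Finset.Icc 2 T,
      0 < ((n k : ℝ) - n (k - 1)) / n k ∧ (n (k - 1) : ℝ) / n k < 1 := by
    intro k hk
    rw [Finset.mem_Icc] at hk
    have hpred := hn.cast_apply_pred_add_one_le (by omega : 1 ≤ k)
    have hpos := hn.cast_apply_pos (by omega : 1 ≤ k)
    exact ⟨div_pos (by linarith) hpos, (div_lt_one hpos).mpr (by linarith)⟩
  refine Finset.sum_lt_sum (fun k hk => ?_) ⟨T, by simp [hT], ?_⟩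
  · obtain ⟨hp, hq⟩ := hratio k hk
    have : 0 ≤ (m k : ℝ) * (((n k : ℝ) - n (k - 1)) / n k) := by positivity
    exact mul_le_of_le_one_right this hq.le
  · obtain ⟨hp, hq⟩ := hratio T (by simp [hT])
    exact mul_lt_of_lt_one_right (by positivity) hq

theorem surplusMean_le {n m : ℕ → ℕ} (hn : StrictMono n) {T : ℕ} (hT : 1 ≤ T)
    (hm : ∀ k ∈ Finset.Icc 2 T, (m (k - 1) : ℝ) ≤ m k * ((n (k - 1) : ℝ) / n k) + 1) :
    surplusMean n m T ≤ m T + n T - m 1 := by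
  let g : ℕ → ℝ := fun k => m k + n k
  calc surplusMean n m T ≤ ∑ k ∈ Finset.Icc (1 + 1) T, (g k - g (k - 1)) := by
        refine Finset.sum_le_sum fun k hk => ?_
        have hk1 : 1 ≤ k := by grind
        have hpred := hn.cast_apply_pred_add_one_le hk1
        have hsplit : (m k : ℝ) * (((n k : ℝ) - n (k - 1)) / n k)
            = m k - m k * ((n (k - 1) : ℝ) / n k) := by
          field_simp [(hn.cast_apply_pos hk1).ne']
        simp only [g]
        linarith [hm k hk]
    _ = g T - g 1 := Finset.sum_Icc_succ_sub_pred g hT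
    _ ≤ m T + n T - m 1 := by simp only [g]; linarith [(n 1).cast_nonneg (α := ℝ)]

theorem binomial_surplus_bounds_general (nseq : ℕ → ℕ)
    (hmono : StrictMono nseq)
    (T : ℕ) (hT : 2 ≤ T) (s α : ℝ) (hs : 1 < s) (hα : α ∈ Set.Ioo (0 : ℝ) 1)
    (mseq : ℕ → ℕ)
    (hm : ∀ k, 1 ≤ k → k ≤ T →
      mseq k = ⌈((nseq k : ℝ) / theta) * Real.log (zetaR s * (nseq k : ℝ) ^ (s + 1) / α)⌉₊) :
    (∑ k ∈ Finset.Icc 2 T, (mseq k : ℝ) * (((nseq k : ℝ) - (nseq (k - 1) : ℝ)) / (nseq k : ℝ))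
          * ((nseq (k - 1) : ℝ) / (nseq k : ℝ)))
      < (∑ k ∈ Finset.Icc 2 T,
          (mseq k : ℝ) * (((nseq k : ℝ) - (nseq (k - 1) : ℝ)) / (nseq k : ℝ))) ∧
    (∑ k ∈ Finset.Icc 2 T,
        (mseq k : ℝ) * (((nseq k : ℝ) - (nseq (k - 1) : ℝ)) / (nseq k : ℝ)))
      ≤ (mseq T : ℝ) + (nseq T : ℝ) - (mseq 1 : ℝ) := by
  obtain ⟨hα0, hα1⟩ := hα
  set L : ℕ → ℝ := fun k => Real.log (zetaR s * (nseq k : ℝ) ^ (s + 1) / α)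
  have hz := one_le_zetaR hs
  have hθ := theta_pos
  have hL_mono : ∀ j k, 1 ≤ j → j ≤ k → L j ≤ L k := fun j k hj hjk => by
    have := hmono.cast_apply_pos hj
    have : (nseq j : ℝ) ≤ nseq k := by exact_mod_cast hmono.monotone hjk
    exact Real.log_le_log (by positivity) (by gcongr)
  have hnT := hmono.cast_apply_pos (by omega : 1 ≤ T)
  have hL_pos : 0 < L T := by
    have hnT_pow : 1 ≤ (nseq T : ℝ) ^ (s + 1) :=
      Real.one_le_rpow (by exact_mod_cast hmono.one_le_apply (by omega)) (by linarith)
    have := one_le_mul_of_one_le_of_one_le hz hnT_pow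
    exact Real.log_pos ((one_lt_div hα0).mpr (by linarith))
  have hmT : 0 < mseq T := by
    rw [hm T (by omega) le_rfl, Nat.ceil_pos]
    positivity
  refine ⟨surplusVariance_lt_surplusMean hmono mseq hT hmT,
    surplusMean_le hmono (by omega) fun k hk => ?_⟩
  rw [Finset.mem_Icc] at hk
  rw [hm k (by omega) hk.2, hm (k - 1) (by omega) (by omega), mul_comm_div, mul_comm_div]
  exact natCeil_mul_le_natCeil_mul_mul_div_add_one (Nat.cast_nonneg _)
    (hmono.cast_apply_pos (by omega))
    (div_le_div_of_nonneg_right (hL_mono _ _ (by omega) (by omega)) hθ.le)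

/-- **Lemma 4.2**: bounds on the mean and variance of `U_T = Σ_{k=2}^T B_k`, where the `B_k`
are independent binomial random variables with `B_k ∼ Bin(m_k, (n_k − n_{k-1})/n_k)`.
Since `E(U_T) = Σ_{k=2}^T m_k (n_k − n_{k-1})/n_k` and
`Var(U_T) = Σ_{k=2}^T m_k ((n_k − n_{k-1})/n_k)(n_{k-1}/n_k)`, the claim
`Var(U_T) < E(U_T) ≤ m_T + n_T − m_1` amounts to the stated arithmetic inequalities. -/
theorem binomial_surplus_bounds (nseq : ℕ → ℕ) (hpos : ∀ k, 1 ≤ nseq k)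
    (hmono : StrictMono nseq)
    (T : ℕ) (hT : 2 ≤ T) (s α : ℝ) (hs : 1 < s) (hα : α ∈ Set.Ioo (0 : ℝ) 1)
    (mseq : ℕ → ℕ)
    (hm : ∀ k, 1 ≤ k → k ≤ T →
      mseq k = ⌈((nseq k : ℝ) / theta) * Real.log (zetaR s * (nseq k : ℝ) ^ (s + 1) / α)⌉₊) :
    (∑ k ∈ Finset.Icc 2 T, (mseq k : ℝ) * (((nseq k : ℝ) - (nseq (k - 1) : ℝ)) / (nseq k : ℝ))
          * ((nseq (k - 1) : ℝ) / (nseq k : ℝ)))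
      < (∑ k ∈ Finset.Icc 2 T,
          (mseq k : ℝ) * (((nseq k : ℝ) - (nseq (k - 1) : ℝ)) / (nseq k : ℝ))) ∧
    (∑ k ∈ Finset.Icc 2 T,
        (mseq k : ℝ) * (((nseq k : ℝ) - (nseq (k - 1) : ℝ)) / (nseq k : ℝ)))
      ≤ (mseq T : ℝ) + (nseq T : ℝ) - (mseq 1 : ℝ) :=
  binomial_surplus_bounds_general nseq hmono T hT s α hs hα mseq hm
end
end

section
/- Let x^1,…,x^m ∈ X be points such that the norm equivalence (1/2)‖v‖² ≤ ‖v‖_m² ≤ (3/2)‖v‖² holds for all v ∈ V (equivalently |||G − I||| ≤ 1/2). Then for every function u with ‖√w · u‖_{L^∞} < +∞, the weighted least-squares estimator satisfies ‖u − u_W‖ ≤ (1 + √2) e_{n,∞,w}(u). -/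
open MeasureTheory Real

noncomputable section

/-- The weight function `w(x) = n / ∑_{i<n} ψ_i(x)²`. -/
def wfun {α : Type*} (n : ℕ) (ψ : ℕ → α → ℝ) (x : α) : ℝ :=
  (n : ℝ) / ∑ i ∈ Finset.range n, ψ i x ^ 2

/-- The squared discrete (weighted, empirical) seminorm `‖f‖_m²`. -/
def discNormSq {α : Type*} (n m : ℕ) (ψ : ℕ → α → ℝ) (xs : Fin m → α) (f : α → ℝ) : ℝ :=
  (1 / (m : ℝ)) * ∑ j : Fin m, wfun n ψ (xs j) * f (xs j) ^ 2

/-- The `L²(X,ρ)` norm of `f`. -/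
def l2Norm {α : Type*} [MeasurableSpace α] (ρ : Measure α) (f : α → ℝ) : ℝ :=
  Real.sqrt (∫ x, f x ^ 2 ∂ρ)

/-- The weighted `L^∞` best-approximation error
`e_{n,∞,w}(u) = inf_{v ∈ V} sup_{y ∈ X} √(w(y)) |u(y) − v(y)|`. -/
def bestEInfW {α : Type*} (n : ℕ) (ψ : ℕ → α → ℝ) (u : α → ℝ) : ℝ :=
  ⨅ c : Fin n → ℝ, ⨆ y, Real.sqrt (wfun n ψ y) * |u y - ∑ i : Fin n, c i * ψ i y|

/-!
Write `v_c = ∑ cᵢ ψᵢ` and `S = ‖√w (u - v_c)‖_∞`. Since `w = n / ∑ ψᵢ²` and `∫ ∑ ψᵢ² = n`, the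
pointwise bound `(u - v_c)² ≤ S² / w` gives both `‖u - v_c‖ ≤ S` and `‖u - v_c‖_m ≤ S`. The
residual `u - u_W` is orthogonal to `V` in the discrete inner product, so discrete Pythagoras gives
`‖v_c - u_W‖_m ≤ ‖u - v_c‖_m ≤ S`, and the norm equivalence turns this into
`‖v_c - u_W‖ ≤ √2 S`. The triangle inequality then bounds `‖u - u_W‖` by `(1 + √2) S` for every
`c`, and one takes the infimum over `c`.
-/

open Finset

section LinComb

variable {α : Type*} {n : ℕ} (ψ : ℕ → α → ℝ)

def linComb (c : Fin n → ℝ) (x : α) : ℝ :=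
  ∑ i : Fin n, c i * ψ i x

lemma linComb_sub (c c' : Fin n → ℝ) (x : α) :
    linComb ψ (c - c') x = linComb ψ c x - linComb ψ c' x := by
  simp only [linComb, Pi.sub_apply, sub_mul, sum_sub_distrib]

lemma linComb_add_smul (c e : Fin n → ℝ) (t : ℝ) (x : α) :
    linComb ψ (c + t • e) x = linComb ψ c x + t * linComb ψ e x := by
  simp only [linComb, Pi.add_apply, Pi.smul_apply, smul_eq_mul, add_mul, sum_add_distrib,
    mul_sum, mul_assoc]

lemma sq_linComb_le (c : Fin n → ℝ) (x : α) :
    linComb ψ c x ^ 2 ≤ (∑ i, c i ^ 2) * ∑ i ∈ range n, ψ i x ^ 2 := by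
  rw [← Fin.sum_univ_eq_sum_range (fun i => ψ i x ^ 2)]
  exact sum_mul_sq_le_sq_mul_sq univ c (fun i => ψ i x)

lemma memLp_linComb [MeasurableSpace α] {μ : Measure α} (hψ : ∀ i, MemLp (ψ i) 2 μ)
    (c : Fin n → ℝ) : MemLp (linComb ψ c) 2 μ := by
  have : linComb ψ c = ∑ i : Fin n, c i • ψ i := by
    ext x
    simp [linComb]
  rw [this]
  exact memLp_finsetSum' _ fun i _ => (hψ i).const_smul (c i)

end LinComb

section Weight

variable {α : Type*} {n : ℕ} {ψ : ℕ → α → ℝ}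

lemma wfun_nonneg (x : α) : 0 ≤ wfun n ψ x :=
  div_nonneg n.cast_nonneg (sum_nonneg fun _ _ => sq_nonneg _)

lemma wfun_mul_sq_linComb_le (c : Fin n → ℝ) (x : α) :
    wfun n ψ x * linComb ψ c x ^ 2 ≤ n * ∑ i, c i ^ 2 := by
  set Q := ∑ i ∈ range n, ψ i x ^ 2
  have hQ : 0 ≤ Q := sum_nonneg fun _ _ => sq_nonneg _
  calc wfun n ψ x * linComb ψ c x ^ 2 ≤ n / Q * ((∑ i, c i ^ 2) * Q) :=
        mul_le_mul_of_nonneg_left (sq_linComb_le ψ c x) (wfun_nonneg x)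
    _ ≤ n * ∑ i, c i ^ 2 := by
        rcases hQ.eq_or_lt with hQ0 | hQpos
        · rw [← hQ0]; simp only [div_zero, zero_mul]; positivity
        · rw [div_mul_eq_mul_div, mul_div_assoc, mul_div_cancel_right₀ _ hQpos.ne']

lemma wfun_mul_sq_le {f : α → ℝ} {S : ℝ} {x : α} (h : √(wfun n ψ x) * |f x| ≤ S) :
    wfun n ψ x * f x ^ 2 ≤ S ^ 2 := by
  have := pow_le_pow_left₀ (by positivity) h 2
  rwa [mul_pow, sq_sqrt (wfun_nonneg x), sq_abs] at this

lemma sq_le_of_sqrt_wfun_mul_abs_le {f : α → ℝ} {S : ℝ} {x : α} (hx : ∃ j < n, ψ j x ≠ 0)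
    (h : √(wfun n ψ x) * |f x| ≤ S) :
    f x ^ 2 ≤ S ^ 2 / n * ∑ i ∈ range n, ψ i x ^ 2 := by
  obtain ⟨j, hj, hψj⟩ := hx
  have hn : (0 : ℝ) < n := by exact_mod_cast (Nat.zero_le j).trans_lt hj
  have hQ : 0 < ∑ i ∈ range n, ψ i x ^ 2 :=
    (by positivity : (0 : ℝ) < ψ j x ^ 2).trans_le
      (single_le_sum (f := fun i => ψ i x ^ 2) (fun _ _ => sq_nonneg _) (mem_range.2 hj))
  have := wfun_mul_sq_le h
  rw [wfun, div_mul_eq_mul_div, div_le_iff₀ hQ] at this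
  rw [div_mul_eq_mul_div, le_div_iff₀ hn]
  linarith

end Weight

section WeightedSupNorm

variable {α : Type*} {n : ℕ} {ψ : ℕ → α → ℝ}

/-- `‖√w f‖_{L^∞}` as a pointwise supremum; it is `0` when that set is unbounded above. -/
def weightedSupNorm (n : ℕ) (ψ : ℕ → α → ℝ) (f : α → ℝ) : ℝ :=
  ⨆ y, √(wfun n ψ y) * |f y|

lemma weightedSupNorm_nonneg (f : α → ℝ) : 0 ≤ weightedSupNorm n ψ f :=
  Real.iSup_nonneg fun _ => by positivity

lemma bddAbove_sqrt_wfun_mul_abs_sub_linComb {u : α → ℝ}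
    (hu : ∃ C, ∀ y, √(wfun n ψ y) * |u y| ≤ C) (c : Fin n → ℝ) :
    BddAbove (Set.range fun y => √(wfun n ψ y) * |u y - linComb ψ c y|) := by
  obtain ⟨C, hC⟩ := hu
  refine ⟨C + √(n * ∑ i, c i ^ 2), ?_⟩
  rintro _ ⟨y, rfl⟩
  have hv : √(wfun n ψ y) * |linComb ψ c y| ≤ √(n * ∑ i, c i ^ 2) := by
    rw [← sqrt_sq_eq_abs, ← sqrt_mul (wfun_nonneg y)]
    exact sqrt_le_sqrt (wfun_mul_sq_linComb_le c y)
  calc √(wfun n ψ y) * |u y - linComb ψ c y|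
      ≤ √(wfun n ψ y) * |u y| + √(wfun n ψ y) * |linComb ψ c y| := by
        rw [← mul_add]; gcongr; exact abs_sub _ _
    _ ≤ C + √(n * ∑ i, c i ^ 2) := add_le_add (hC y) hv

end WeightedSupNorm

section L2

variable {α : Type*} [MeasurableSpace α] {μ : Measure α}

lemma l2Norm_eq_norm_toLp {f : α → ℝ} (hf : MemLp f 2 μ) : l2Norm μ f = ‖hf.toLp f‖ := by
  rw [Lp.norm_toLp, hf.eLpNorm_eq_integral_rpow_norm two_ne_zero ENNReal.ofNat_ne_top,
    ENNReal.toReal_ofReal (by positivity), l2Norm, sqrt_eq_rpow]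
  norm_num [rpow_two]

lemma l2Norm_add_le {f g : α → ℝ} (hf : MemLp f 2 μ) (hg : MemLp g 2 μ) :
    l2Norm μ (f + g) ≤ l2Norm μ f + l2Norm μ g := by
  rw [l2Norm_eq_norm_toLp hf, l2Norm_eq_norm_toLp hg, l2Norm_eq_norm_toLp (hf.add hg),
    MemLp.toLp_add]
  exact norm_add_le _ _

lemma integrable_sq_of_integral_mul_self_ne_zero {f : α → ℝ} (h : ∫ x, f x * f x ∂μ ≠ 0) :
    Integrable (fun x => f x ^ 2) μ := by
  simpa only [sq] using Integrable.of_integral_ne_zero h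

lemma memLp_two_of_sq_le {f g : α → ℝ} (hf : AEStronglyMeasurable f μ) (hg : Integrable g μ)
    (h : ∀ x, f x ^ 2 ≤ g x) : MemLp f 2 μ :=
  (memLp_two_iff_integrable_sq hf).2 <| hg.mono' (hf.pow 2) <| .of_forall fun x => by
    simpa only [norm_pow, Real.norm_eq_abs, sq_abs] using h x

variable {n : ℕ} {ψ : ℕ → α → ℝ}

lemma integrable_sum_sq (hψ : ∀ i, ∫ x, ψ i x * ψ i x ∂μ = 1) :
    Integrable (fun x => ∑ i ∈ range n, ψ i x ^ 2) μ :=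
  integrable_finsetSum _ fun i _ => integrable_sq_of_integral_mul_self_ne_zero (by simp [hψ i])

lemma integral_sum_sq_eq (hψ : ∀ i, ∫ x, ψ i x * ψ i x ∂μ = 1) :
    ∫ x, ∑ i ∈ range n, ψ i x ^ 2 ∂μ = n := by
  rw [integral_finsetSum _ fun i _ => integrable_sq_of_integral_mul_self_ne_zero (by simp [hψ i])]
  simp [sq, hψ]

lemma memLp_two_of_sqrt_wfun_mul_abs_le (hψ : ∀ i, ∫ x, ψ i x * ψ i x ∂μ = 1)
    (hnd : ∀ x, ∃ j < n, ψ j x ≠ 0) {f : α → ℝ} (hf : AEStronglyMeasurable f μ) {S : ℝ}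
    (hS : ∀ y, √(wfun n ψ y) * |f y| ≤ S) : MemLp f 2 μ :=
  memLp_two_of_sq_le hf ((integrable_sum_sq hψ).const_mul _)
    fun x => sq_le_of_sqrt_wfun_mul_abs_le (hnd x) (hS x)

lemma l2Norm_le_of_sqrt_wfun_mul_abs_le (hψ : ∀ i, ∫ x, ψ i x * ψ i x ∂μ = 1)
    (hnd : ∀ x, ∃ j < n, ψ j x ≠ 0) {f : α → ℝ} {S : ℝ} (hS0 : 0 ≤ S)
    (hS : ∀ y, √(wfun n ψ y) * |f y| ≤ S) : l2Norm μ f ≤ S := by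
  have hint : ∫ x, f x ^ 2 ∂μ ≤ S ^ 2 / n * n := calc
    ∫ x, f x ^ 2 ∂μ ≤ ∫ x, S ^ 2 / n * ∑ i ∈ range n, ψ i x ^ 2 ∂μ :=
      integral_mono_of_nonneg (.of_forall fun _ => sq_nonneg _)
        ((integrable_sum_sq hψ).const_mul _)
        (.of_forall fun x => sq_le_of_sqrt_wfun_mul_abs_le (hnd x) (hS x))
    _ = S ^ 2 / n * n := by rw [integral_const_mul, integral_sum_sq_eq hψ]
  have hcancel : S ^ 2 / n * n ≤ S ^ 2 := by
    rcases eq_or_ne (n : ℝ) 0 with hn | hn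
    · simp [hn, sq_nonneg]
    · rw [div_mul_cancel₀ _ hn]
  exact sqrt_le_iff.2 ⟨hS0, hint.trans hcancel⟩

end L2

section Discrete

variable {α : Type*} {n m : ℕ} {ψ : ℕ → α → ℝ} {xs : Fin m → α}

def discInner (n m : ℕ) (ψ : ℕ → α → ℝ) (xs : Fin m → α) (f g : α → ℝ) : ℝ :=
  (1 / (m : ℝ)) * ∑ j : Fin m, wfun n ψ (xs j) * (f (xs j) * g (xs j))

lemma discNormSq_nonneg (f : α → ℝ) : 0 ≤ discNormSq n m ψ xs f :=
  mul_nonneg (by positivity) (sum_nonneg fun _ _ => mul_nonneg (wfun_nonneg _) (sq_nonneg _))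

lemma discNormSq_le_of_forall_le {f : α → ℝ} {B : ℝ} (hB : 0 ≤ B)
    (h : ∀ j, wfun n ψ (xs j) * f (xs j) ^ 2 ≤ B) : discNormSq n m ψ xs f ≤ B := by
  have hsum : ∑ j : Fin m, wfun n ψ (xs j) * f (xs j) ^ 2 ≤ m * B := by
    simpa using sum_le_sum fun j (_ : j ∈ univ) => h j
  calc discNormSq n m ψ xs f ≤ 1 / m * (m * B) := by
        unfold discNormSq; gcongr
    _ ≤ B := by
        rcases eq_or_ne (m : ℝ) 0 with hm | hm
        · simp [hm, hB]
        · rw [← mul_assoc, one_div_mul_cancel hm, one_mul]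

lemma discNormSq_sub_mul (f g : α → ℝ) (t : ℝ) :
    discNormSq n m ψ xs (fun x => f x - t * g x) =
      discNormSq n m ψ xs f - 2 * t * discInner n m ψ xs f g + t ^ 2 * discNormSq n m ψ xs g := by
  simp only [discNormSq, discInner, mul_sum]
  rw [← sum_sub_distrib, ← sum_add_distrib]
  exact sum_congr rfl fun j _ => by ring

lemma discInner_eq_zero_of_forall_le {f g : α → ℝ}
    (hmin : ∀ t : ℝ, discNormSq n m ψ xs f ≤ discNormSq n m ψ xs (fun x => f x - t * g x)) :
    discInner n m ψ xs f g = 0 := by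
  have hdisc := discrim_le_zero (a := discNormSq n m ψ xs g) (b := -2 * discInner n m ψ xs f g)
    (c := 0) fun t => by linarith [hmin t, discNormSq_sub_mul (n := n) (ψ := ψ) (xs := xs) f g t]
  rw [discrim] at hdisc
  nlinarith [sq_nonneg (discInner n m ψ xs f g)]

lemma discNormSq_linComb_sub_le {u : α → ℝ} {cW : Fin n → ℝ}
    (hcW : ∀ c : Fin n → ℝ, discNormSq n m ψ xs (fun x => u x - linComb ψ cW x) ≤
      discNormSq n m ψ xs (fun x => u x - linComb ψ c x)) (c : Fin n → ℝ) :
    discNormSq n m ψ xs (linComb ψ (c - cW)) ≤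
      discNormSq n m ψ xs (fun x => u x - linComb ψ c x) := by
  set r := fun x => u x - linComb ψ cW x
  have horth : discInner n m ψ xs r (linComb ψ (c - cW)) = 0 :=
    discInner_eq_zero_of_forall_le fun t => by
      convert hcW (cW + t • (c - cW)) using 2
      ext x; rw [linComb_add_smul]; ring
  have hsplit : (fun x => u x - linComb ψ c x) = fun x => r x - 1 * linComb ψ (c - cW) x := by
    ext x; rw [linComb_sub]; ring
  rw [hsplit, discNormSq_sub_mul, horth]
  linarith [discNormSq_nonneg (n := n) (ψ := ψ) (xs := xs) r]

end Discrete

lemma l2Norm_linComb_sub_le {α : Type*} [MeasurableSpace α] {μ : Measure α} {n m : ℕ}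
    {ψ : ℕ → α → ℝ} {xs : Fin m → α}
    (hequiv : ∀ c : Fin n → ℝ,
      (1 / 2) * ∫ x, linComb ψ c x ^ 2 ∂μ ≤ discNormSq n m ψ xs (linComb ψ c))
    {u : α → ℝ} {cW : Fin n → ℝ}
    (hcW : ∀ c : Fin n → ℝ, discNormSq n m ψ xs (fun x => u x - linComb ψ cW x) ≤
      discNormSq n m ψ xs (fun x => u x - linComb ψ c x))
    {c : Fin n → ℝ} {S : ℝ} (hS0 : 0 ≤ S) (hS : ∀ y, √(wfun n ψ y) * |u y - linComb ψ c y| ≤ S) :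
    l2Norm μ (linComb ψ (c - cW)) ≤ √2 * S := by
  rw [← sqrt_sq hS0, ← sqrt_mul zero_le_two]
  refine sqrt_le_sqrt ?_
  calc ∫ x, linComb ψ (c - cW) x ^ 2 ∂μ ≤ 2 * discNormSq n m ψ xs (linComb ψ (c - cW)) := by
        linarith [hequiv (c - cW)]
    _ ≤ 2 * discNormSq n m ψ xs (fun x => u x - linComb ψ c x) := by
        gcongr; exact discNormSq_linComb_sub_le hcW c
    _ ≤ 2 * S ^ 2 := by
        gcongr; exact discNormSq_le_of_forall_le (sq_nonneg S) fun j =>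
          wfun_mul_sq_le (f := fun x => u x - linComb ψ c x) (hS _)

theorem wls_error_bound_of_norm_equivalence_general {d : ℕ} (X : Set (EuclideanSpace ℝ (Fin d)))
    (ρ : Measure X)
    (ψ : ℕ → X → ℝ) (hψmeas : ∀ i, Measurable (ψ i))
    (horth : ∀ i j, ∫ x, ψ i x * ψ j x ∂ρ = if i = j then (1 : ℝ) else 0)
    (n m : ℕ)
    (hnd : ∀ x : X, ∃ j < n, ψ j x ≠ 0)
    (xs : Fin m → X)
    -- the norm equivalence on V:
    (hequiv : ∀ c : Fin n → ℝ,
      (1 / 2) * (∫ x, (∑ i : Fin n, c i * ψ i x) ^ 2 ∂ρ) ≤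
          discNormSq n m ψ xs (fun x => ∑ i : Fin n, c i * ψ i x) ∧
        discNormSq n m ψ xs (fun x => ∑ i : Fin n, c i * ψ i x) ≤
          (3 / 2) * ∫ x, (∑ i : Fin n, c i * ψ i x) ^ 2 ∂ρ)
    (u : X → ℝ) (humeas : Measurable u)
    (hbound : ∃ C : ℝ, ∀ y : X, Real.sqrt (wfun n ψ y) * |u y| ≤ C)
    -- `cW` are the coefficients of a weighted least-squares estimator `u_W`:
    (cW : Fin n → ℝ)
    (hcW : ∀ c : Fin n → ℝ,
      discNormSq n m ψ xs (fun x => u x - ∑ i : Fin n, cW i * ψ i x) ≤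
        discNormSq n m ψ xs (fun x => u x - ∑ i : Fin n, c i * ψ i x)) :
    l2Norm ρ (fun x => u x - ∑ i : Fin n, cW i * ψ i x) ≤
      (1 + Real.sqrt 2) * bestEInfW n ψ u := by
  have hψ : ∀ i, ∫ x, ψ i x * ψ i x ∂ρ = 1 := fun i => by simpa using horth i i
  have hψL2 : ∀ i, MemLp (ψ i) 2 ρ := fun i =>
    (memLp_two_iff_integrable_sq (hψmeas i).aestronglyMeasurable).2
      (integrable_sq_of_integral_mul_self_ne_zero (by simp [hψ i]))
  have hfit : ∀ c : Fin n → ℝ, l2Norm ρ (fun x => u x - linComb ψ cW x) ≤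
      (1 + √2) * weightedSupNorm n ψ (fun x => u x - linComb ψ c x) := by
    intro c
    set S := weightedSupNorm n ψ (fun x => u x - linComb ψ c x)
    have hS : ∀ y, √(wfun n ψ y) * |u y - linComb ψ c y| ≤ S :=
      le_ciSup (bddAbove_sqrt_wfun_mul_abs_sub_linComb hbound c)
    have hS0 : 0 ≤ S := weightedSupNorm_nonneg _
    have hres : MemLp (fun x => u x - linComb ψ c x) 2 ρ := memLp_two_of_sqrt_wfun_mul_abs_le hψ
      hnd (humeas.aestronglyMeasurable.sub (memLp_linComb ψ hψL2 c).1) hS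
    calc l2Norm ρ (fun x => u x - linComb ψ cW x)
        = l2Norm ρ ((fun x => u x - linComb ψ c x) + linComb ψ (c - cW)) := by
          congr 1; ext x; simp only [Pi.add_apply, linComb_sub]; ring
      _ ≤ S + √2 * S := (l2Norm_add_le hres (memLp_linComb ψ hψL2 _)).trans <|
          add_le_add (l2Norm_le_of_sqrt_wfun_mul_abs_le hψ hnd hS0 hS)
            (l2Norm_linComb_sub_le (fun c => (hequiv c).1) hcW hS0 hS)
      _ = (1 + √2) * S := by ring
  rw [bestEInfW, mul_iInf_of_nonneg (by positivity)]
  exact le_ciInf hfit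

/-- **Deterministic error bound under the norm equivalence**: if the points `x^1,…,x^m` satisfy
`(1/2)‖v‖² ≤ ‖v‖_m² ≤ (3/2)‖v‖²` for all `v ∈ V`, then for every `u` with
`‖√w u‖_∞ < ∞`, any weighted least-squares estimator `u_W` satisfies
`‖u − u_W‖ ≤ (1 + √2) e_{n,∞,w}(u)`. -/
theorem wls_error_bound_of_norm_equivalence {d : ℕ} (X : Set (EuclideanSpace ℝ (Fin d)))
    (hX : MeasurableSet X) (ρ : Measure X) [IsProbabilityMeasure ρ]
    (ψ : ℕ → X → ℝ) (hψmeas : ∀ i, Measurable (ψ i))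
    (horth : ∀ i j, ∫ x, ψ i x * ψ j x ∂ρ = if i = j then (1 : ℝ) else 0)
    (n m : ℕ) (hn : 1 ≤ n) (hm : 1 ≤ m)
    (hnd : ∀ x : X, ∃ j < n, ψ j x ≠ 0)
    (xs : Fin m → X)
    -- the norm equivalence on V:
    (hequiv : ∀ c : Fin n → ℝ,
      (1 / 2) * (∫ x, (∑ i : Fin n, c i * ψ i x) ^ 2 ∂ρ) ≤
          discNormSq n m ψ xs (fun x => ∑ i : Fin n, c i * ψ i x) ∧
        discNormSq n m ψ xs (fun x => ∑ i : Fin n, c i * ψ i x) ≤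
          (3 / 2) * ∫ x, (∑ i : Fin n, c i * ψ i x) ^ 2 ∂ρ)
    (u : X → ℝ) (humeas : Measurable u)
    (hbound : ∃ C : ℝ, ∀ y : X, Real.sqrt (wfun n ψ y) * |u y| ≤ C)
    -- `cW` are the coefficients of a weighted least-squares estimator `u_W`:
    (cW : Fin n → ℝ)
    (hcW : ∀ c : Fin n → ℝ,
      discNormSq n m ψ xs (fun x => u x - ∑ i : Fin n, cW i * ψ i x) ≤
        discNormSq n m ψ xs (fun x => u x - ∑ i : Fin n, c i * ψ i x)) :
    l2Norm ρ (fun x => u x - ∑ i : Fin n, cW i * ψ i x) ≤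
      (1 + Real.sqrt 2) * bestEInfW n ψ u :=
  wls_error_bound_of_norm_equivalence_general X ρ ψ hψmeas horth n m hnd xs hequiv u humeas hbound
    cW hcW
end
end
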